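/- (Theorem 8.1, 2°.) In the symmetric setup with A_γ the Friedrichs extension of A_min, let Ã ∈ M be closed, corresponding to T : V → W. If m(Ã) > −∞, then V ⊂ W and m(T) ≥ m(Ã). -/

import Mathlib

noncomputable section

open Filter Topology

namespace GrubbExt

variable {H : Type*} [NormedAddCommGroup H] [InnerProductSpace ℂ H] [CompleteSpace H]

/-- The inclusion of a closed subspace composed with the orthogonal projection onto it,
as a continuous linear map `H →L[ℂ] H`.  This is `i_K ∘ pr_K` in the notation of the paper. -/
def projCl (K : Submodule ℂ H) (hK : IsClosed (K : Set H)) : H →L[ℂ] H :=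
  haveI : CompleteSpace K := hK.completeSpace_coe
  K.subtypeL.comp (K.orthogonalProjectionOnto)

/-- `R` is the (everywhere defined, bounded) inverse of `P - lam`. -/
structure IsResolvent (P : H →ₗ.[ℂ] H) (lam : ℂ) (R : H →L[ℂ] H) : Prop where
  mem : ∀ f : H, R f ∈ P.domain
  left : ∀ u : P.domain, R (P u - lam • (u : H)) = u
  right : ∀ f : H, P ⟨R f, mem f⟩ - lam • R f = f

/-- `E^λ := I + λ(A_γ - λ)^{-1}`, given the resolvent `R = (A_γ - λ)^{-1}`. -/
def Eop (lam : ℂ) (R : H →L[ℂ] H) : H →L[ℂ] H := ContinuousLinearMap.id ℂ H + lam • R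

/-- `E'^{λ̄} := I + λ̄(A_γ^* - λ̄)^{-1}`, given the resolvent `R' = (A_γ^* - λ̄)^{-1}`. -/
def Eop' (lam : ℂ) (R' : H →L[ℂ] H) : H →L[ℂ] H :=
  ContinuousLinearMap.id ℂ H + (starRingEnd ℂ lam) • R'

/-- The resolvent set of a partially defined operator. -/
def resSet (P : H →ₗ.[ℂ] H) : Set ℂ := {lam | ∃ R : H →L[ℂ] H, IsResolvent P lam R}

/-- The set of "Rayleigh quotients" `Re⟨Pu,u⟩` over unit vectors `u` in the domain of `P`;
the lower bound `m(P)` is the infimum of this set. -/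
def raySet (P : H →ₗ.[ℂ] H) : Set ℝ :=
  {r | ∃ u : P.domain, ‖(u : H)‖ = 1 ∧ r = (inner ℂ (P u) (u : H) : ℂ).re}

/-- The abstract set-up of Grubb's extension theory: a dual pair `A_min, A'_min` of closed
densely defined operators in a Hilbert space `H`, together with a reference operator `A_γ`
lying between `A_min` and `A_max := (A'_min)*`, which is bijective with bounded inverse
(and whose adjoint is likewise bijective with bounded inverse). -/
structure Setup (H : Type*) [NormedAddCommGroup H] [InnerProductSpace ℂ H]
    [CompleteSpace H] where
  Amin : H →ₗ.[ℂ] H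
  Amin' : H →ₗ.[ℂ] H
  closed_Amin : IsClosed (Amin.graph : Set (H × H))
  closed_Amin' : IsClosed (Amin'.graph : Set (H × H))
  dense_Amin : Dense (Amin.domain : Set H)
  dense_Amin' : Dense (Amin'.domain : Set H)
  Amin_le_max : Amin ≤ Amin'.adjoint
  Amin'_le_max' : Amin' ≤ Amin.adjoint
  Agam : H →ₗ.[ℂ] H
  Amin_le_Agam : Amin ≤ Agam
  Agam_le_max : Agam ≤ Amin'.adjoint
  Agaminv : H →L[ℂ] H
  Agaminv_mem : ∀ f : H, Agaminv f ∈ Agam.domain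
  Agaminv_left : ∀ u : Agam.domain, Agaminv (Agam u) = u
  Agaminv_right : ∀ f : H, Agam ⟨Agaminv f, Agaminv_mem f⟩ = f
  Agamstarinv : H →L[ℂ] H
  Agamstarinv_mem : ∀ f : H, Agamstarinv f ∈ Agam.adjoint.domain
  Agamstarinv_left : ∀ v : Agam.adjoint.domain, Agamstarinv (Agam.adjoint v) = v
  Agamstarinv_right : ∀ f : H, Agam.adjoint ⟨Agamstarinv f, Agamstarinv_mem f⟩ = f

namespace Setup

variable (S : Setup H)

/-- `A_max := (A'_min)*`. -/
def Amax : H →ₗ.[ℂ] H := S.Amin'.adjoint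

/-- `A'_max := (A_min)*`. -/
def Amax' : H →ₗ.[ℂ] H := S.Amin.adjoint

/-- `u_ζ := u - A_γ^{-1} A_max u`, the nullspace component of `u ∈ D(A_max)`. -/
def uzeta (u : S.Amax.domain) : H := (u : H) - S.Agaminv (S.Amax u)

/-- `v_{ζ'} := v - (A_γ^*)^{-1} A'_max v`, the nullspace component of `v ∈ D(A'_max)`. -/
def vzeta (v : S.Amax'.domain) : H := (v : H) - S.Agamstarinv (S.Amax' v)

/-- `Z := ker A_max`, as a submodule of `H`. -/
def Zker : Submodule ℂ H := (LinearMap.ker S.Amax.toFun).map S.Amax.domain.subtype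

/-- `Z' := ker A'_max`, as a submodule of `H`. -/
def Zker' : Submodule ℂ H := (LinearMap.ker S.Amax'.toFun).map S.Amax'.domain.subtype

lemma coe_Zker :
    (S.Zker : Set H) = ⋂ v : S.Amin'.domain, {y : H | (inner ℂ y (S.Amin' v) : ℂ) = 0} := by
  ext y
  simp only [Set.mem_iInter, Set.mem_setOf_eq, SetLike.mem_coe, Zker, Submodule.mem_map,
    LinearMap.mem_ker]
  constructor
  · rintro ⟨u, hu, rfl⟩ v
    have h := (LinearPMap.adjoint_isFormalAdjoint S.dense_Amin') u v
    have hu' : S.Amin'.adjoint u = 0 := hu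
    rw [hu'] at h
    simpa using h.symm
  · intro h
    have hmem : y ∈ S.Amax.domain := by
      refine LinearPMap.mem_adjoint_domain_of_exists _ ⟨0, fun x => ?_⟩
      simp [h x]
    refine ⟨⟨y, hmem⟩, ?_, rfl⟩
    exact LinearPMap.adjoint_apply_eq S.dense_Amin' ⟨y, hmem⟩ fun x => by simp [h x]

lemma isClosed_Zker : IsClosed (S.Zker : Set H) := by
  rw [S.coe_Zker]
  exact isClosed_iInter fun v =>
    isClosed_eq (Continuous.inner continuous_id continuous_const) continuous_const

lemma coe_Zker' :
    (S.Zker' : Set H) = ⋂ v : S.Amin.domain, {y : H | (inner ℂ y (S.Amin v) : ℂ) = 0} := by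
  ext y
  simp only [Set.mem_iInter, Set.mem_setOf_eq, SetLike.mem_coe, Zker', Submodule.mem_map,
    LinearMap.mem_ker]
  constructor
  · rintro ⟨u, hu, rfl⟩ v
    have h := (LinearPMap.adjoint_isFormalAdjoint S.dense_Amin) u v
    have hu' : S.Amin.adjoint u = 0 := hu
    rw [hu'] at h
    simpa using h.symm
  · intro h
    have hmem : y ∈ S.Amax'.domain := by
      refine LinearPMap.mem_adjoint_domain_of_exists _ ⟨0, fun x => ?_⟩
      simp [h x]
    refine ⟨⟨y, hmem⟩, ?_, rfl⟩
    exact LinearPMap.adjoint_apply_eq S.dense_Amin ⟨y, hmem⟩ fun x => by simp [h x]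

lemma isClosed_Zker' : IsClosed (S.Zker' : Set H) := by
  rw [S.coe_Zker']
  exact isClosed_iInter fun v =>
    isClosed_eq (Continuous.inner continuous_id continuous_const) continuous_const

/-- The orthogonal projection onto `Z = ker A_max`. -/
def projZ : H →L[ℂ] H := projCl S.Zker S.isClosed_Zker

/-- The orthogonal projection onto `Z' = ker A'_max`. -/
def projZ' : H →L[ℂ] H := projCl S.Zker' S.isClosed_Zker'

variable (At : H →ₗ.[ℂ] H)

/-- `D(T) = {u_ζ : u ∈ D(Ã)}`, the set of nullspace components of elements of `D(Ã)`. -/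
def dzeta : Set H := {x | ∃ u : S.Amax.domain, (u : H) ∈ At.domain ∧ x = S.uzeta u}

/-- `{v_{ζ'} : v ∈ D(Ã*)}`. -/
def dzeta' : Set H := {x | ∃ v : S.Amax'.domain, (v : H) ∈ At.adjoint.domain ∧ x = S.vzeta v}

/-- `V := closure {u_ζ : u ∈ D(Ã)}`. -/
def Vsub : Submodule ℂ H := (Submodule.span ℂ (S.dzeta At)).topologicalClosure

/-- `W := closure {v_{ζ'} : v ∈ D(Ã*)}`. -/
def Wsub : Submodule ℂ H := (Submodule.span ℂ (S.dzeta' At)).topologicalClosure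

lemma isClosed_Vsub : IsClosed ((S.Vsub At : Set H)) :=
  Submodule.isClosed_topologicalClosure _

lemma isClosed_Wsub : IsClosed ((S.Wsub At : Set H)) :=
  Submodule.isClosed_topologicalClosure _

/-- The orthogonal projection onto `V`. -/
def projV : H →L[ℂ] H := projCl (S.Vsub At) (S.isClosed_Vsub At)

/-- The orthogonal projection onto `W`. -/
def projW : H →L[ℂ] H := projCl (S.Wsub At) (S.isClosed_Wsub At)

/-- The set `{(u_ζ, pr_W (A_max u)) : u ∈ D(Ã)}`, for a general closed subspace `W`. -/
def TgraphOn (W : Submodule ℂ H) (hW : IsClosed (W : Set H)) : Set (H × H) :=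
  {p | ∃ u : S.Amax.domain, (u : H) ∈ At.domain ∧ p.1 = S.uzeta u ∧
    p.2 = projCl W hW (S.Amax u)}

/-- The graph of the operator `T : V → W` corresponding to `Ã`. -/
def Tgraph : Set (H × H) := S.TgraphOn At (S.Wsub At) (S.isClosed_Wsub At)


/-- `F^λ := I - λ A_γ^{-1}`. -/
def Fop (lam : ℂ) : H →L[ℂ] H := ContinuousLinearMap.id ℂ H - lam • S.Agaminv

/-- `F'^{λ̄} := I - λ̄ (A_γ^*)^{-1}`. -/
def Fop' (lam : ℂ) : H →L[ℂ] H := ContinuousLinearMap.id ℂ H - (starRingEnd ℂ lam) • S.Agamstarinv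

/-- `Z_λ := ker(A_max - λ)`, as a subset of `H`. -/
def ZkerL (lam : ℂ) : Set H :=
  {x | ∃ hx : x ∈ S.Amax.domain, S.Amax ⟨x, hx⟩ = lam • x}

/-- `Z'_{λ̄} := ker(A'_max - λ̄)`, as a subset of `H`. -/
def ZkerL' (lam : ℂ) : Set H :=
  {x | ∃ hx : x ∈ S.Amax'.domain, S.Amax' ⟨x, hx⟩ = (starRingEnd ℂ lam) • x}

/-- `pr^λ_ζ u := u - (A_γ - λ)^{-1}(A_max - λ)u`, given the resolvent `R = (A_γ - λ)^{-1}`. -/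
def uzetaL (lam : ℂ) (R : H →L[ℂ] H) (u : S.Amax.domain) : H :=
  (u : H) - R (S.Amax u - lam • (u : H))

/-- `pr^{λ̄}_{ζ'} v := v - (A_γ^* - λ̄)^{-1}(A'_max - λ̄)v`,
given the resolvent `R' = (A_γ^* - λ̄)^{-1}`. -/
def vzetaL (lam : ℂ) (R' : H →L[ℂ] H) (v : S.Amax'.domain) : H :=
  (v : H) - R' (S.Amax' v - (starRingEnd ℂ lam) • (v : H))

/-- `D(T^λ) = {pr^λ_ζ u : u ∈ D(Ã)}`. -/
def dzetaL (lam : ℂ) (R : H →L[ℂ] H) : Set H :=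
  {x | ∃ u : S.Amax.domain, (u : H) ∈ At.domain ∧ x = S.uzetaL lam R u}

/-- `{pr^{λ̄}_{ζ'} v : v ∈ D(Ã*)}`. -/
def dzetaL' (lam : ℂ) (R' : H →L[ℂ] H) : Set H :=
  {x | ∃ v : S.Amax'.domain, (v : H) ∈ At.adjoint.domain ∧ x = S.vzetaL lam R' v}

/-- `V_λ := closure {pr^λ_ζ u : u ∈ D(Ã)}`. -/
def VLsub (lam : ℂ) (R : H →L[ℂ] H) : Submodule ℂ H :=
  (Submodule.span ℂ (S.dzetaL At lam R)).topologicalClosure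

/-- `W_{λ̄} := closure {pr^{λ̄}_{ζ'} v : v ∈ D(Ã*)}`. -/
def WLsub (lam : ℂ) (R' : H →L[ℂ] H) : Submodule ℂ H :=
  (Submodule.span ℂ (S.dzetaL' At lam R')).topologicalClosure

lemma isClosed_WLsub (lam : ℂ) (R' : H →L[ℂ] H) : IsClosed ((S.WLsub At lam R' : Set H)) :=
  Submodule.isClosed_topologicalClosure _

/-- The orthogonal projection onto `W_{λ̄}`. -/
def projWL (lam : ℂ) (R' : H →L[ℂ] H) : H →L[ℂ] H :=
  projCl (S.WLsub At lam R') (S.isClosed_WLsub At lam R')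

/-- The graph of the operator `T^λ : V_λ → W_{λ̄}` corresponding to `Ã - λ`:
`{(pr^λ_ζ u, pr_{W_{λ̄}}((A_max - λ)u)) : u ∈ D(Ã)}`. -/
def TgraphL (lam : ℂ) (R R' : H →L[ℂ] H) : Set (H × H) :=
  {p | ∃ u : S.Amax.domain, (u : H) ∈ At.domain ∧ p.1 = S.uzetaL lam R u ∧
    p.2 = S.projWL At lam R' (S.Amax u - lam • (u : H))}

/-- `G^λ_{V,W} x := -pr_W (λ E^λ x)`, where `W = W(Ã)`. -/
def Gval (lam : ℂ) (R : H →L[ℂ] H) (x : H) : H :=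
  -(S.projW At (lam • Eop lam R x))

/-- `G^μ_{Z,Z} z := -pr_Z (μ E^μ z)`. -/
def GZval (lam : ℂ) (R : H →L[ℂ] H) (x : H) : H :=
  -(S.projZ (lam • Eop lam R x))

lemma mem_Amax_res {lam : ℂ} {Rt : H →L[ℂ] H} (h2 : At ≤ S.Amax)
    (hRt : IsResolvent At lam Rt) (w : H) :
    S.Agaminv w - Rt (w - lam • S.Agaminv w) ∈ S.Amax.domain :=
  Submodule.sub_mem _ (S.Agam_le_max.1 (S.Agaminv_mem w)) (h2.1 (hRt.mem _))

/-- `M(λ) w := pr_ζ ((I - (Ã - λ)^{-1}(A_max - λ)) A_γ^{-1} w)`, the value of the abstract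
`M`-function on `w`. -/
def Mval {lam : ℂ} {Rt : H →L[ℂ] H} (h2 : At ≤ S.Amax) (hRt : IsResolvent At lam Rt)
    (w : H) : H :=
  S.uzeta ⟨S.Agaminv w - Rt (w - lam • S.Agaminv w), S.mem_Amax_res At h2 hRt w⟩

end Setup


/-!
Write `e(x) = Re ⟪Ã x, x⟫`. Given `u ∈ D(Ã)`, split `u = u_γ + u_ζ` and approximate `u_γ ∈ D(A_γ)`
by `f_n ∈ D(A_min)` in the energy of the Friedrichs extension. Then `u - f_n ∈ D(Ã)` tends to
`u_ζ`, and since `A_min f_n ⊥ Z ∋ u_ζ`, `e(u - f_n) → Re ⟪A_max u, u_ζ⟫`. So any lower bound `c`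
of `Ã` gives `c ‖u_ζ‖² ≤ Re ⟪A_max u, u_ζ⟫`.

For `y ⊥ W`, the relation `⟪Ã* v, A_γ⁻¹ y⟫ = ⟪v - v_ζ, y⟫ = ⟪v, y⟫` and `Ã = Ã**` put `A_γ⁻¹ y` in
`D(Ã)`. Taking `y = u_ζ - pr_W u_ζ`, the elements `u - n A_γ⁻¹ y ∈ D(Ã)` have the same `u_ζ` while
the right-hand side drops by `n ‖y‖²`; hence `y = 0`, i.e. `u_ζ ∈ W` and `V ⊂ W`. Finally
`⟪T u_ζ, u_ζ⟫ = ⟪pr_W A_max u, u_ζ⟫ = ⟪A_max u, u_ζ⟫`, so the same inequality bounds `T` below.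
-/

section Adjoint

variable {𝕜 E F : Type*} [RCLike 𝕜] [NormedAddCommGroup E] [InnerProductSpace 𝕜 E]
  [NormedAddCommGroup F] [InnerProductSpace 𝕜 F] [CompleteSpace E]

theorem _root_.LinearPMap.adjoint_le_adjoint {P Q : E →ₗ.[𝕜] F}
    (hP : Dense (P.domain : Set E)) (hPQ : P ≤ Q) : Q.adjoint ≤ P.adjoint :=
  LinearPMap.IsFormalAdjoint.le_adjoint hP fun x y => by
    rw [hPQ.2 (x := x) (y := ⟨x, hPQ.1 x.2⟩) rfl]
    exact (LinearPMap.adjoint_isFormalAdjoint (hP.mono hPQ.1)).symm _ y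

theorem _root_.LinearPMap.mem_graph_of_forall_inner_adjoint [CompleteSpace F]
    {P : E →ₗ.[𝕜] F} (hd : Dense (P.domain : Set E)) (hcl : P.IsClosed) {g : E} {y : F}
    (h : ∀ v : P.adjoint.domain, inner 𝕜 (P.adjoint v) g = inner 𝕜 (v : F) y) :
    (g, y) ∈ P.graph := by
  let G : Submodule 𝕜 (WithLp 2 (E × F)) :=
    P.graph.comap (WithLp.linearEquiv 2 𝕜 (E × F)).toLinearMap
  have hG : IsClosed (G : Set (WithLp 2 (E × F))) :=
    hcl.preimage (WithLp.prod_continuous_ofLp 2 E F)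
  have : CompleteSpace G := hG.completeSpace_coe
  suffices WithLp.toLp 2 (g, y) ∈ Gᗮᗮ by rwa [Submodule.orthogonal_orthogonal] at this
  rw [Submodule.mem_orthogonal]
  intro q hq
  have hq' : ((q.snd, -q.fst) : F × E) ∈ P.graph.adjoint := by
    rw [Submodule.mem_adjoint_iff]
    rintro a b hab
    have := (Submodule.mem_orthogonal G q).1 hq (WithLp.toLp 2 (a, b)) hab
    rw [WithLp.prod_inner_apply] at this
    simpa [add_comm] using this
  rw [← LinearPMap.adjoint_graph_eq_graph_adjoint hd, LinearPMap.mem_graph_iff] at hq'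
  obtain ⟨v, hv, hPv⟩ := hq'
  have := h v
  rw [hPv, hv, inner_neg_left, neg_eq_iff_eq_neg] at this
  simp [WithLp.prod_inner_apply, this]

end Adjoint

section Form

variable {E : Type*} [NormedAddCommGroup E] [InnerProductSpace ℂ E]

theorem mul_norm_sq_le_re_inner_of_raySet {P : E →ₗ.[ℂ] E} {c : ℝ}
    (h : ∀ r ∈ raySet P, c ≤ r) (x : P.domain) :
    c * ‖(x : E)‖ ^ 2 ≤ (inner ℂ (P x) (x : E)).re := by
  obtain hx | hx := eq_or_ne (x : E) 0
  · simp [show x = 0 from Subtype.ext hx]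
  have ht : 0 < ‖(x : E)‖ := norm_pos_iff.2 hx
  set s : ℂ := ((‖(x : E)‖⁻¹ : ℝ) : ℂ)
  have hunit : ‖((s • x : P.domain) : E)‖ = 1 := by
    simp [s, norm_smul, ht.ne']
  have hray := h _ ⟨s • x, hunit, rfl⟩
  have hscale : (inner ℂ (P (s • x)) ((s • x : P.domain) : E)).re
      = (‖(x : E)‖ ^ 2)⁻¹ * (inner ℂ (P x) (x : E)).re := by
    simp only [LinearPMap.map_smul, Submodule.coe_smul, inner_smul_left, inner_smul_right, s,
      Complex.conj_ofReal, ← mul_assoc, ← Complex.ofReal_mul, Complex.re_ofReal_mul]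
    ring
  rw [hscale, le_inv_mul_iff₀ (by positivity), mul_comm] at hray
  exact hray

variable {P : E →ₗ.[ℂ] E}

theorem re_inner_map_sub_of_isFormalAdjoint (hsym : P.IsFormalAdjoint P) (a b : P.domain) :
    (inner ℂ (P (b - a)) ((b - a : P.domain) : E)).re
      = (inner ℂ (P a) (a : E)).re + (inner ℂ (P b) (b : E)).re
        - 2 * (inner ℂ (P a) (b : E)).re := by
  have hswap : (inner ℂ (P b) (a : E)).re = (inner ℂ (P a) (b : E)).re := by
    rw [hsym, ← inner_conj_symm, Complex.conj_re]
  simp only [LinearPMap.map_sub, Submodule.coe_sub, inner_sub_left, inner_sub_right,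
    Complex.sub_re, hswap]
  ring

theorem tendsto_re_inner_sub_of_cauchy (hsym : P.IsFormalAdjoint P)
    (hnonneg : ∀ a : P.domain, 0 ≤ (inner ℂ (P a) (a : E)).re)
    {u : P.domain} {f : ℕ → P.domain} (hf : Tendsto (fun n => (f n : E)) atTop (𝓝 u))
    (hcauchy : Tendsto (fun p : ℕ × ℕ =>
      inner ℂ (P (f p.1 - f p.2)) ((f p.1 : E) - (f p.2 : E))) atTop (𝓝 0)) :
    Tendsto (fun n => (inner ℂ (P (u - f n)) ((u : E) - f n)).re) atTop (𝓝 0) := by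
  have hw : Tendsto (fun m => (u : E) - f m) atTop (𝓝 0) := by
    simpa using hf.const_sub (u : E)
  rw [Metric.tendsto_atTop]
  intro ε hε
  obtain ⟨N, hN⟩ := Filter.eventually_atTop.1
    (hcauchy.eventually (Metric.ball_mem_nhds 0 (half_pos hε)))
  refine ⟨max N.1 N.2, fun n hn => ?_⟩
  have hcross : Tendsto (fun m => ε / 2 + 2 * (inner ℂ (P (u - f n)) ((u : E) - f m)).re)
      atTop (𝓝 (ε / 2)) := by
    have := (Complex.continuous_re.tendsto _).comp
      ((tendsto_const_nhds (x := P (u - f n))).inner (𝕜 := ℂ) hw)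
    simpa only [Function.comp_def, inner_zero_right, Complex.zero_re, mul_zero, add_zero] using
      (this.const_mul 2).const_add (ε / 2)
  -- with `w k := u - f k` and `e x := Re ⟪P x, x⟫`:
  -- `e (w n) ≤ e (w n) + e (w m) = e (f n - f m) + 2 Re ⟪P (w n), w m⟫`
  have hle : ∀ᶠ m in atTop, (inner ℂ (P (u - f n)) ((u : E) - f n)).re
      ≤ ε / 2 + 2 * (inner ℂ (P (u - f n)) ((u : E) - f m)).re := by
    rw [Filter.eventually_atTop]
    refine ⟨max N.1 N.2, fun m hm => ?_⟩
    have hnm := hN (n, m) ⟨le_of_max_le_left hn, le_of_max_le_right hm⟩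
    rw [dist_zero_right] at hnm
    have hdiff : f n - f m = (u - f m) - (u - f n) := by abel
    have hpar := re_inner_map_sub_of_isFormalAdjoint hsym (u - f n) (u - f m)
    rw [← hdiff] at hpar
    have := (Complex.re_le_norm _).trans hnm.le
    push_cast at hpar this
    have h0 := hnonneg (u - f m)
    push_cast at h0
    linarith
  have := ge_of_tendsto hcross hle
  have h0 := hnonneg (u - f n)
  push_cast at h0
  rw [Real.dist_eq, sub_zero, abs_of_nonneg h0]
  linarith

end Form

theorem inner_projCl_left_of_mem (K : Submodule ℂ H) (hK : IsClosed (K : Set H)) (x : H)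
    {z : H} (hz : z ∈ K) : inner ℂ (projCl K hK x) z = inner ℂ x z := by
  have : CompleteSpace K := hK.completeSpace_coe
  rw [show projCl K hK x = K.starProjection x from rfl,
    Submodule.inner_starProjection_left_eq_right, Submodule.starProjection_eq_self_iff.2 hz]

namespace Setup

variable (S : Setup H)

theorem dense_Agam : Dense (S.Agam.domain : Set H) :=
  S.dense_Amin.mono S.Amin_le_Agam.1

theorem Amax_Agaminv (f : H) :
    S.Amax ⟨S.Agaminv f, S.Agam_le_max.1 (S.Agaminv_mem f)⟩ = f :=
  (S.Agam_le_max.2 rfl).symm.trans (S.Agaminv_right f)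

theorem uzeta_sub (u v : S.Amax.domain) : S.uzeta (u - v) = S.uzeta u - S.uzeta v := by
  simp only [uzeta, LinearPMap.map_sub, map_sub, Submodule.coe_sub]
  abel

theorem uzeta_smul (a : ℂ) (u : S.Amax.domain) : S.uzeta (a • u) = a • S.uzeta u := by
  simp only [uzeta, LinearPMap.map_smul, map_smul, Submodule.coe_smul, smul_sub]

theorem uzeta_Agaminv (f : H) :
    S.uzeta ⟨S.Agaminv f, S.Agam_le_max.1 (S.Agaminv_mem f)⟩ = 0 := by
  rw [uzeta, Amax_Agaminv, sub_self]

theorem uzeta_mem_Zker (u : S.Amax.domain) : S.uzeta u ∈ S.Zker := by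
  refine ⟨u - ⟨S.Agaminv (S.Amax u), S.Agam_le_max.1 (S.Agaminv_mem _)⟩, ?_, rfl⟩
  show S.Amax _ = 0
  rw [LinearPMap.map_sub, Amax_Agaminv, sub_self]

theorem inner_Amin_uzeta_eq_zero (hsym : S.Amin' = S.Amin) (v : S.Amin.domain) (u : S.Amax.domain) :
    inner ℂ (S.Amin v) (S.uzeta u) = 0 := by
  have hZ : S.uzeta u ∈ (S.Zker : Set H) := S.uzeta_mem_Zker u
  rw [coe_Zker, hsym, Set.mem_iInter] at hZ
  rw [← inner_conj_symm, hZ v, map_zero]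

theorem isFormalAdjoint_Agam (hsa : S.Agam.adjoint = S.Agam) :
    S.Agam.IsFormalAdjoint S.Agam := by
  have := LinearPMap.adjoint_isFormalAdjoint S.dense_Agam
  rwa [hsa] at this

theorem inner_Agaminv_left_eq_right (hsa : S.Agam.adjoint = S.Agam) (f g : H) :
    inner ℂ (S.Agaminv f) g = inner ℂ f (S.Agaminv g) := by
  have := S.isFormalAdjoint_Agam hsa ⟨S.Agaminv f, S.Agaminv_mem f⟩ ⟨S.Agaminv g, S.Agaminv_mem g⟩
  rwa [S.Agaminv_right, S.Agaminv_right, eq_comm] at this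

theorem Agamstarinv_eq_Agaminv (hsa : S.Agam.adjoint = S.Agam) (f : H) :
    S.Agamstarinv f = S.Agaminv f := by
  obtain ⟨hdom, happ⟩ := LinearPMap.ext_iff.mp hsa
  have hmem : S.Agamstarinv f ∈ S.Agam.domain := hdom ▸ S.Agamstarinv_mem f
  have h := S.Agaminv_left ⟨S.Agamstarinv f, hmem⟩
  rw [← happ (hf := S.Agamstarinv_mem f), S.Agamstarinv_right] at h
  exact h.symm

variable {S}

theorem exists_seq_tendsto_uzeta (hsym : S.Amin' = S.Amin) (hsa : S.Agam.adjoint = S.Agam)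
    (hnonneg : ∀ a : S.Agam.domain, 0 ≤ (inner ℂ (S.Agam a) (a : H)).re)
    (hFr : ∀ u : S.Agam.domain, ∃ f : ℕ → S.Amin.domain,
      Tendsto (fun n => ((f n : H))) atTop (𝓝 (u : H)) ∧
      Tendsto (fun p : ℕ × ℕ =>
        (inner ℂ (S.Amin (f p.1 - f p.2)) ((f p.1 : H) - (f p.2 : H)) : ℂ))
        atTop (𝓝 0))
    {At : H →ₗ.[ℂ] H} (h1 : S.Amin ≤ At) (h2 : At ≤ S.Amax)
    (u : S.Amax.domain) (hu : (u : H) ∈ At.domain) :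
    ∃ x : ℕ → At.domain, Tendsto (fun n => (x n : H)) atTop (𝓝 (S.uzeta u)) ∧
      Tendsto (fun n => (inner ℂ (At (x n)) (x n : H)).re) atTop
        (𝓝 (inner ℂ (S.Amax u) (S.uzeta u)).re) := by
  let ug : S.Agam.domain := ⟨S.Agaminv (S.Amax u), S.Agaminv_mem _⟩
  obtain ⟨f, hf, hcauchy⟩ := hFr ug
  let fg : ℕ → S.Agam.domain := fun n => ⟨f n, S.Amin_le_Agam.1 (f n).2⟩
  have hAgam_fg : ∀ n, S.Agam (fg n) = S.Amin (f n) := fun n => (S.Amin_le_Agam.2 rfl).symm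
  have henergy := tendsto_re_inner_sub_of_cauchy (S.isFormalAdjoint_Agam hsa) hnonneg
    (u := ug) (f := fg) hf (by simpa only [LinearPMap.map_sub, hAgam_fg] using hcauchy)
  have hsplit : ∀ n, ((u : H) - f n) = ((ug : H) - f n) + S.uzeta u := by
    intro n
    simp only [uzeta, ug]
    abel
  have hAx : ∀ n, At ⟨u - f n, sub_mem hu (h1.1 (f n).2)⟩ = S.Agam (ug - fg n) := by
    intro n
    rw [h2.2 (y := u - ⟨f n, S.Amin_le_max.1 (f n).2⟩) rfl, LinearPMap.map_sub,
      LinearPMap.map_sub, hAgam_fg, S.Agaminv_right]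
    exact congrArg _ (S.Amin_le_max.2 rfl).symm
  refine ⟨fun n => ⟨u - f n, sub_mem hu (h1.1 (f n).2)⟩, ?_, ?_⟩
  · simpa [hsplit] using (hf.const_sub (ug : H)).add_const (S.uzeta u)
  · have hlim := henergy.add_const (inner ℂ (S.Amax u) (S.uzeta u)).re
    rw [zero_add] at hlim
    refine hlim.congr fun n => ?_
    dsimp only
    rw [hAx n, hsplit n, inner_add_right, Complex.add_re]
    congr 2
    rw [LinearPMap.map_sub, hAgam_fg, S.Agaminv_right, inner_sub_left,
      S.inner_Amin_uzeta_eq_zero hsym, sub_zero]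

theorem mul_norm_uzeta_sq_le (hsym : S.Amin' = S.Amin) (hsa : S.Agam.adjoint = S.Agam)
    (hnonneg : ∀ a : S.Agam.domain, 0 ≤ (inner ℂ (S.Agam a) (a : H)).re)
    (hFr : ∀ u : S.Agam.domain, ∃ f : ℕ → S.Amin.domain,
      Tendsto (fun n => ((f n : H))) atTop (𝓝 (u : H)) ∧
      Tendsto (fun p : ℕ × ℕ =>
        (inner ℂ (S.Amin (f p.1 - f p.2)) ((f p.1 : H) - (f p.2 : H)) : ℂ))
        atTop (𝓝 0))
    {At : H →ₗ.[ℂ] H} (h1 : S.Amin ≤ At) (h2 : At ≤ S.Amax)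
    {c : ℝ} (hc : ∀ r ∈ raySet At, c ≤ r) (u : S.Amax.domain) (hu : (u : H) ∈ At.domain) :
    c * ‖S.uzeta u‖ ^ 2 ≤ (inner ℂ (S.Amax u) (S.uzeta u)).re := by
  obtain ⟨x, hx, hAx⟩ := exists_seq_tendsto_uzeta hsym hsa hnonneg hFr h1 h2 u hu
  exact le_of_tendsto_of_tendsto' ((hx.norm.pow 2).const_mul c) hAx
    fun n => mul_norm_sq_le_re_inner_of_raySet hc (x n)

theorem Agaminv_mem_domain_of_mem_orthogonal (hsa : S.Agam.adjoint = S.Agam)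
    {At : H →ₗ.[ℂ] H} (h1 : S.Amin ≤ At) (hcl : At.IsClosed) {y : H}
    (hy : y ∈ (S.Wsub At)ᗮ) : S.Agaminv y ∈ At.domain := by
  have hadj : At.adjoint ≤ S.Amax' := LinearPMap.adjoint_le_adjoint S.dense_Amin h1
  refine LinearPMap.mem_domain_of_mem_graph (y := y)
    (LinearPMap.mem_graph_of_forall_inner_adjoint (S.dense_Amin.mono h1.1) hcl fun v => ?_)
  let v' : S.Amax'.domain := ⟨v, hadj.1 v.2⟩
  have hv' : S.vzeta v' = v - S.Agaminv (At.adjoint v) := by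
    rw [vzeta, S.Agamstarinv_eq_Agaminv hsa, ← hadj.2 (x := v) (y := v') rfl]
  have hW : S.vzeta v' ∈ S.Wsub At :=
    Submodule.le_topologicalClosure _ (Submodule.subset_span ⟨v', v.2, rfl⟩)
  have h0 := (Submodule.mem_orthogonal _ y).1 hy _ hW
  rw [hv', inner_sub_left, sub_eq_zero] at h0
  rw [← S.inner_Agaminv_left_eq_right hsa, h0]

theorem uzeta_mem_Wsub (hsa : S.Agam.adjoint = S.Agam) {At : H →ₗ.[ℂ] H} (h1 : S.Amin ≤ At)
    (hcl : At.IsClosed) {c : ℝ}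
    (hkey : ∀ u : S.Amax.domain, (u : H) ∈ At.domain →
      c * ‖S.uzeta u‖ ^ 2 ≤ (inner ℂ (S.Amax u) (S.uzeta u)).re)
    (u : S.Amax.domain) (hu : (u : H) ∈ At.domain) : S.uzeta u ∈ S.Wsub At := by
  have : CompleteSpace (S.Wsub At) := (S.isClosed_Wsub At).completeSpace_coe
  set z := S.uzeta u
  set y := z - (S.Wsub At).starProjection z
  have hy : y ∈ (S.Wsub At)ᗮ := Submodule.sub_starProjection_mem_orthogonal z
  have hyz : inner ℂ y z = ((‖y‖ ^ 2 : ℝ) : ℂ) := by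
    have hz : z = y + (S.Wsub At).starProjection z := (sub_add_cancel z _).symm
    rw [hz, inner_add_right, (Submodule.mem_orthogonal' _ y).1 hy _
      (Submodule.starProjection_apply_mem _ z), add_zero, inner_self_eq_norm_sq_to_K]
    norm_cast
  let x : S.Amax.domain := ⟨S.Agaminv y, S.Agam_le_max.1 (S.Agaminv_mem y)⟩
  have hx : (x : H) ∈ At.domain := S.Agaminv_mem_domain_of_mem_orthogonal hsa h1 hcl hy
  have hstep : ∀ n : ℕ, c * ‖z‖ ^ 2 ≤ (inner ℂ (S.Amax u) z).re - n * ‖y‖ ^ 2 := by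
    intro n
    have := hkey (u - (n : ℂ) • x) (sub_mem hu (Submodule.smul_mem _ _ hx))
    rwa [S.uzeta_sub, S.uzeta_smul, S.uzeta_Agaminv, smul_zero, sub_zero, LinearPMap.map_sub,
      LinearPMap.map_smul, S.Amax_Agaminv, inner_sub_left, inner_smul_left, hyz,
      Complex.conj_natCast, ← Complex.ofReal_natCast, ← Complex.ofReal_mul, Complex.sub_re,
      Complex.ofReal_re] at this
  have hy0 : y = 0 := by
    by_contra hne
    have hpos : 0 < ‖y‖ ^ 2 := by positivity
    obtain ⟨n, hn⟩ := exists_nat_gt (((inner ℂ (S.Amax u) z).re - c * ‖z‖ ^ 2) / ‖y‖ ^ 2)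
    rw [div_lt_iff₀ hpos] at hn
    linarith [hstep n]
  exact Submodule.starProjection_eq_self_iff.1 (sub_eq_zero.1 hy0).symm

theorem le_of_mem_raySet_of_graph_eq {At T : H →ₗ.[ℂ] H}
    (hT : (T.graph : Set (H × H)) = S.Tgraph At)
    (hW : ∀ u : S.Amax.domain, (u : H) ∈ At.domain → S.uzeta u ∈ S.Wsub At) {c : ℝ}
    (hkey : ∀ u : S.Amax.domain, (u : H) ∈ At.domain →
      c * ‖S.uzeta u‖ ^ 2 ≤ (inner ℂ (S.Amax u) (S.uzeta u)).re) :
    ∀ r ∈ raySet T, c ≤ r := by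
  rintro r ⟨x, hx, rfl⟩
  have hmem : ((x : H), T x) ∈ S.Tgraph At := hT ▸ T.mem_graph x
  obtain ⟨u, hu, hxu : (x : H) = S.uzeta u, hTx : T x = _⟩ := hmem
  rw [hTx, hxu, inner_projCl_left_of_mem _ _ _ (hW u hu)]
  rw [hxu] at hx
  simpa [hx] using hkey u hu

end Setup

theorem statement_17 (S : Setup H) (hsym : S.Amin' = S.Amin) (hsa : S.Agam.adjoint = S.Agam)
    (hgpos : ∃ c : ℝ, 0 < c ∧ ∀ r ∈ raySet S.Agam, c ≤ r)
    (hFr : ∀ u : S.Agam.domain, ∃ f : ℕ → S.Amin.domain,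
      Tendsto (fun n => ((f n : H))) atTop (𝓝 (u : H)) ∧
      Tendsto (fun p : ℕ × ℕ =>
        (inner ℂ (S.Amin (f p.1 - f p.2)) ((f p.1 : H) - (f p.2 : H)) : ℂ))
        atTop (𝓝 0))
    (At : H →ₗ.[ℂ] H)
    (h1 : S.Amin ≤ At) (h2 : At ≤ S.Amax)
    (hcl : IsClosed (At.graph : Set (H × H)))
    (T : H →ₗ.[ℂ] H) (hT : (T.graph : Set (H × H)) = S.Tgraph At)
    (hbd : ∃ c : ℝ, ∀ r ∈ raySet At, c ≤ r) :
    S.Vsub At ≤ S.Wsub At ∧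
    ∀ c : ℝ, (∀ r ∈ raySet At, c ≤ r) → ∀ r ∈ raySet T, c ≤ r := by
  obtain ⟨c₀, hc₀, hAgam⟩ := hgpos
  have hnonneg : ∀ a : S.Agam.domain, 0 ≤ (inner ℂ (S.Agam a) (a : H)).re := fun a =>
    (by positivity : 0 ≤ c₀ * ‖(a : H)‖ ^ 2).trans (mul_norm_sq_le_re_inner_of_raySet hAgam a)
  have hkey {c : ℝ} (hc : ∀ r ∈ raySet At, c ≤ r) :=
    S.mul_norm_uzeta_sq_le hsym hsa hnonneg hFr h1 h2 hc
  obtain ⟨c, hc⟩ := hbd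
  have hW := S.uzeta_mem_Wsub hsa h1 hcl (hkey hc)
  refine ⟨Submodule.topologicalClosure_minimal _ ?_ (S.isClosed_Wsub At),
    fun c' hc' => S.le_of_mem_raySet_of_graph_eq hT hW (hkey hc')⟩
  rw [Submodule.span_le]
  rintro _ ⟨u, hu, rfl⟩
  exact hW u hu

end GrubbExt
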